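/- Let (A,B) be a coisotropic pair in (V,ω) and let k₁ = dim(A^ω ∩ B^ω), k₂ = dim A^ω, k₃ = dim B^ω, k₄ = (1/2) dim V, k₅ = dim(A^ω ∩ B) be its canonical invariants. Then 0 ≤ k₁ ≤ k₅ ≤ k₂ and k₁ + k₂ ≤ k₃ + k₅ ≤ k₁ + k₄. -/

import Mathlib

open Module

variable {V : Type*} [AddCommGroup V] [Module ℝ V]

/-- The symplectic orthogonal of a subspace `W`:
`{v ∈ V | ω v w = 0 for all w ∈ W}`. -/
def sorth (ω : LinearMap.BilinForm ℝ V) (W : Submodule ℝ V) : Submodule ℝ V where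
  carrier := {v | ∀ w ∈ W, ω v w = 0}
  add_mem' := by
    intro a b ha hb w hw
    simp only [Set.mem_setOf_eq] at *
    simp [ha w hw, hb w hw]
  zero_mem' := by intro w hw; simp
  smul_mem' := by
    intro c a ha w hw
    simp only [Set.mem_setOf_eq] at *
    simp [ha w hw]

/-- Two subspaces are `ω`-orthogonal. -/
def OrthSub (ω : LinearMap.BilinForm ℝ V) (E F : Submodule ℝ V) : Prop :=
  ∀ e ∈ E, ∀ f ∈ F, ω e f = 0


/-! Write `A' = sorth ω A`, `B' = sorth ω B`. Since `A' ⊓ B = sorth ω (A ⊔ B')`, counting dimensions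
gives `k₃ + k₅ = k₂ + dim (A ⊓ B')`. The subspace `A' ⊔ (A ⊓ B')` is isotropic (`A'` and `B'` are
isotropic, and `A ⊓ B'` lies in `A = sorth ω A'`), so its dimension `k₂ + dim (A ⊓ B') - k₁` is at
most `k₄`; the other inequalities are monotonicity of `finrank` along `A' ≤ A` and `B' ≤ B`. -/

section SymplecticOrthogonal

variable {ω : LinearMap.BilinForm ℝ V} {X Y W : Submodule ℝ V}

lemma sorth_antitone (h : X ≤ Y) : sorth ω Y ≤ sorth ω X :=
  fun _ hv w hw => hv w (h hw)

lemma sorth_sup : sorth ω (X ⊔ Y) = sorth ω X ⊓ sorth ω Y := by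
  refine le_antisymm (le_inf (sorth_antitone le_sup_left) (sorth_antitone le_sup_right)) ?_
  rintro v ⟨hX, hY⟩ w hw
  obtain ⟨x, hx, y, hy, rfl⟩ := Submodule.mem_sup.1 hw
  simp [hX x hx, hY y hy]

lemma le_sorth_comm (hr : ω.IsRefl) : X ≤ sorth ω Y ↔ Y ≤ sorth ω X :=
  ⟨fun h _ hy _ hx => hr _ _ (h hx _ hy), fun h _ hx _ hy => hr _ _ (h hy _ hx)⟩

lemma le_sorth_sorth (hr : ω.IsRefl) : W ≤ sorth ω (sorth ω W) :=
  (le_sorth_comm hr).1 le_rfl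

lemma sorth_eq_orthogonal (hr : ω.IsRefl) : sorth ω W = ω.orthogonal W := by
  ext v
  exact ⟨fun hv w hw => hr _ _ (hv w hw), fun hv w hw => hr _ _ (hv w hw)⟩

lemma sup_le_sorth_sup (hr : ω.IsRefl) (hX : X ≤ sorth ω X) (hY : Y ≤ sorth ω Y)
    (hXY : X ≤ sorth ω Y) : X ⊔ Y ≤ sorth ω (X ⊔ Y) := by
  rw [sorth_sup]
  exact sup_le (le_inf hX hXY) (le_inf ((le_sorth_comm hr).1 hXY) hY)

lemma sorth_sup_inf_sorth_le_sorth (hr : ω.IsRefl) (hX : sorth ω X ≤ X) (hY : sorth ω Y ≤ Y) :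
    sorth ω X ⊔ (X ⊓ sorth ω Y) ≤ sorth ω (sorth ω X ⊔ (X ⊓ sorth ω Y)) :=
  sup_le_sorth_sup hr (hX.trans (le_sorth_sorth hr))
    (inf_le_right.trans <| hY.trans <| (le_sorth_sorth hr).trans <| sorth_antitone inf_le_right)
    (sorth_antitone inf_le_left)

variable [FiniteDimensional ℝ V]

lemma finrank_sorth_add_finrank (hω : ω.Nondegenerate) (hr : ω.IsRefl) (W : Submodule ℝ V) :
    finrank ℝ (sorth ω W) + finrank ℝ W = finrank ℝ V := by
  rw [sorth_eq_orthogonal hr, LinearMap.BilinForm.finrank_orthogonal hω]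
  have := W.finrank_le
  omega

lemma sorth_sorth (hω : ω.Nondegenerate) (hr : ω.IsRefl) (W : Submodule ℝ V) :
    sorth ω (sorth ω W) = W := by
  rw [sorth_eq_orthogonal hr, sorth_eq_orthogonal hr]
  exact LinearMap.BilinForm.orthogonal_orthogonal hω hr W

lemma two_mul_finrank_le_of_le_sorth (hω : ω.Nondegenerate) (hr : ω.IsRefl)
    (hW : W ≤ sorth ω W) : 2 * finrank ℝ W ≤ finrank ℝ V := by
  have := finrank_sorth_add_finrank hω hr W
  have := Submodule.finrank_mono hW
  omega

lemma finrank_sorth_inf_add_finrank_sorth (hω : ω.Nondegenerate) (hr : ω.IsRefl)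
    (X Y : Submodule ℝ V) :
    finrank ℝ (sorth ω X ⊓ Y : Submodule ℝ V) + finrank ℝ (sorth ω Y) =
      finrank ℝ (sorth ω X) + finrank ℝ (X ⊓ sorth ω Y : Submodule ℝ V) := by
  have hinf : sorth ω X ⊓ Y = sorth ω (X ⊔ sorth ω Y) := by
    rw [sorth_sup, sorth_sorth hω hr]
  have := finrank_sorth_add_finrank hω hr (X ⊔ sorth ω Y)
  have := finrank_sorth_add_finrank hω hr X
  have := Submodule.finrank_sup_add_finrank_inf_eq X (sorth ω Y)
  rw [hinf]
  omega

end SymplecticOrthogonal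

theorem canonical_invariants_inequalities [FiniteDimensional ℝ V]
    (ω : LinearMap.BilinForm ℝ V) (hω : ω.Nondegenerate) (hωalt : ω.IsAlt)
    (A B : Submodule ℝ V) (hA : sorth ω A ≤ A) (hB : sorth ω B ≤ B)
    (k₁ k₂ k₃ k₄ k₅ : ℕ)
    (hk₁ : k₁ = finrank ℝ (sorth ω A ⊓ sorth ω B : Submodule ℝ V))
    (hk₂ : k₂ = finrank ℝ (sorth ω A))
    (hk₃ : k₃ = finrank ℝ (sorth ω B))
    (hk₄ : finrank ℝ V = 2 * k₄)
    (hk₅ : k₅ = finrank ℝ (sorth ω A ⊓ B : Submodule ℝ V)) :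
    0 ≤ k₁ ∧ k₁ ≤ k₅ ∧ k₅ ≤ k₂ ∧ k₁ + k₂ ≤ k₃ + k₅ ∧ k₃ + k₅ ≤ k₁ + k₄ := by
  have hr := hωalt.isRefl
  have h₁₅ := Submodule.finrank_mono (inf_le_inf_left (sorth ω A) hB)
  have h₅₂ := Submodule.finrank_mono (inf_le_left : sorth ω A ⊓ B ≤ sorth ω A)
  have h₁d := Submodule.finrank_mono (inf_le_inf_right (sorth ω B) hA)
  have hd := finrank_sorth_inf_add_finrank_sorth hω hr A B
  have hiso := two_mul_finrank_le_of_le_sorth hω hr (sorth_sup_inf_sorth_le_sorth hr hA hB)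
  have hsup := Submodule.finrank_sup_add_finrank_inf_eq (sorth ω A) (A ⊓ sorth ω B)
  rw [← inf_assoc, inf_eq_left.2 hA] at hsup
  subst hk₁ hk₂ hk₃ hk₅
  omega
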